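/- Let Γ = ℤ ⋉_{φ₂} C₁₁ and Λ = ℤ ⋉_{φ₆} C₁₁, where C₁₁ is cyclic of order 11 with generator a, α is a generator of Aut(C₁₁) ≅ ℤ/10, and φ_k: ℤ → Aut(C₁₁) sends 1 to α^k. Then Γ and Λ are not isomorphic as groups, although their profinite completions are isomorphic. -/

import Mathlib

/-- The index type of finite quotients: finite-index normal subgroups. -/
def FinQuot (G : Type*) [Group G] : Type _ :=
  {N : Subgroup G // N.Normal ∧ N.FiniteIndex}

instance {G : Type*} [Group G] (N : FinQuot G) : N.1.Normal := N.2.1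
instance {G : Type*} [Group G] (N : FinQuot G) : N.1.FiniteIndex := N.2.2

instance {G : Type*} [Group G] (N : FinQuot G) : TopologicalSpace (G ⧸ N.1) := ⊥

/-- The subgroup of compatible families in the product of all finite quotients. -/
def profCompat (G : Type*) [Group G] : Subgroup (Π N : FinQuot G, G ⧸ N.1) where
  carrier := {x | ∀ (N M : FinQuot G) (h : N.1 ≤ M.1),
    QuotientGroup.map N.1 M.1 (MonoidHom.id G) (by simpa using h) (x N) = x M}
  one_mem' := by intro N M h; simp
  mul_mem' := by
    intro a b ha hb N M h
    simp only [Pi.mul_apply, map_mul, ha N M h, hb N M h]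
  inv_mem' := by
    intro a ha N M h
    simp only [Pi.inv_apply, map_inv, ha N M h]

/-- The profinite completion of a group, as the inverse limit of its finite quotients. -/
def ProfComp (G : Type*) [Group G] : Type _ := profCompat G

instance {G : Type*} [Group G] : Group (ProfComp G) :=
  inferInstanceAs (Group (profCompat G))

instance {G : Type*} [Group G] : TopologicalSpace (ProfComp G) :=
  inferInstanceAs (TopologicalSpace {x : Π N : FinQuot G, G ⧸ N.1 // x ∈ profCompat G})

/-- The canonical map from a group to its profinite completion. -/
def toProf (G : Type*) [Group G] : G →* ProfComp G where
  toFun g := ⟨fun N => QuotientGroup.mk g, by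
    intro N M h
    simp [QuotientGroup.map_mk]⟩
  map_one' := by apply Subtype.ext; funext N; rfl
  map_mul' a b := by apply Subtype.ext; funext N; rfl

/-- The pullback of a finite-index normal subgroup along a homomorphism. -/
def pullFQ {Λ Γ : Type*} [Group Λ] [Group Γ] (φ : Λ →* Γ) (N : FinQuot Γ) : FinQuot Λ :=
  ⟨N.1.comap φ, N.2.1.comap φ, ⟨by
    refine ne_zero_of_dvd_ne_zero N.2.2.index_ne_zero ?_
    rw [Subgroup.index_comap]
    exact Subgroup.relIndex_dvd_index_of_normal N.1 φ.range⟩⟩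

/-- The induced homomorphism between profinite completions. -/
def profMap {Λ Γ : Type*} [Group Λ] [Group Γ] (φ : Λ →* Γ) :
    ProfComp Λ →* ProfComp Γ where
  toFun x := ⟨fun N => QuotientGroup.map (pullFQ φ N).1 N.1 φ le_rfl (x.1 (pullFQ φ N)), by
    intro N M h
    obtain ⟨g, hg⟩ := QuotientGroup.mk_surjective (x.1 (pullFQ φ N))
    have hx := x.2 (pullFQ φ N) (pullFQ φ M) (Subgroup.comap_mono h)
    show QuotientGroup.map _ _ _ _
        (QuotientGroup.map _ _ φ _ (x.1 (pullFQ φ N))) =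
      QuotientGroup.map _ _ φ _ (x.1 (pullFQ φ M))
    rw [← hx, ← hg]
    rfl⟩
  map_one' := by
    apply Subtype.ext
    funext N
    show QuotientGroup.map _ _ φ _ ((1 : ProfComp Λ).1 (pullFQ φ N)) = _
    rw [show ((1 : ProfComp Λ).1 (pullFQ φ N)) = 1 from rfl, map_one]
    rfl
  map_mul' a b := by
    apply Subtype.ext
    funext N
    show QuotientGroup.map _ _ _ _ ((a * b).1 (pullFQ φ N)) = _
    have : (a * b).1 (pullFQ φ N) = a.1 (pullFQ φ N) * b.1 (pullFQ φ N) := rfl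
    rw [this, map_mul]
    rfl

/-- A group is residually finite if every nontrivial element survives in some finite
quotient. -/
def ResiduallyFinite (G : Type*) [Group G] : Prop :=
  ∀ g : G, g ≠ 1 → ∃ N : Subgroup G, N.Normal ∧ N.FiniteIndex ∧ g ∉ N

/-!
An isomorphism `C₁₁ ⋊_{α²} ℤ ≃* C₁₁ ⋊_{α⁶} ℤ` maps the torsion subgroup `C₁₁` onto itself and the
generator `t` of `ℤ` to `c t^{±1}`, so its restriction to `C₁₁` conjugates `α²` to `α^{±6}`. As
`Aut(C₁₁)` is abelian this forces `α² = α^{±6}`, impossible for `α` of order `10`.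

The completions are isomorphic by `t ↦ t^u` for a unit `u` of `Ẑ` with `u ≡ 2 mod 5`, because then
`(α⁶)^u = α²`. No integer unit has this property, but `u = (2, 1, 1, …)` in
`Ẑ = ℤ₅ × ∏_{ℓ ≠ 5} ℤ_ℓ` does. On a finite quotient of index `n` the twist uses a residue of `u`
modulo `n`, and the compatibility of these residues turns the twists into a map of inverse limits,
whose inverse is the twist by `u⁻¹`.
-/

theorem Nat.ModEq.of_mul_modEq_one {m a a' b b' : ℕ} (ha : a ≡ a' [MOD m])
    (h : a * b ≡ 1 [MOD m]) (h' : a' * b' ≡ 1 [MOD m]) : b ≡ b' [MOD m] :=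
  calc b = b * 1 := (mul_one b).symm
    _ ≡ b * (a' * b') [MOD m] := h'.symm.mul_left b
    _ ≡ b * (a * b') [MOD m] := (ha.symm.mul_right b').mul_left b
    _ = a * b * b' := by ring
    _ ≡ 1 * b' [MOD m] := h.mul_right b'
    _ = b' := one_mul b'

theorem Nat.two_mul_succ_div_two_modEq_one {q : ℕ} (hq : Odd q) :
    2 * ((q + 1) / 2) ≡ 1 [MOD q] := by
  rw [Nat.mul_div_cancel' (even_iff_two_dvd.mp hq.add_one)]
  exact Nat.add_modEq_left

/-- A unit of `Ẑ = lim ℤ/nℤ`, by compatible residues modulo every `n ≠ 0` and their inverses. -/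
structure ProfiniteUnit where
  val : ℕ → ℕ
  inv : ℕ → ℕ
  val_compat : ∀ ⦃m n : ℕ⦄, n ≠ 0 → m ∣ n → val n ≡ val m [MOD m]
  val_mul_inv : ∀ ⦃n : ℕ⦄, n ≠ 0 → val n * inv n ≡ 1 [MOD n]

namespace ProfiniteUnit

variable (u : ProfiniteUnit)

theorem inv_compat ⦃m n : ℕ⦄ (hn : n ≠ 0) (hmn : m ∣ n) : u.inv n ≡ u.inv m [MOD m] :=
  (u.val_compat hn hmn).of_mul_modEq_one ((u.val_mul_inv hn).of_dvd hmn)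
    (u.val_mul_inv (ne_zero_of_dvd_ne_zero hn hmn))

def symm : ProfiniteUnit where
  val := u.inv
  inv := u.val
  val_compat := u.inv_compat
  val_mul_inv n hn := by rw [mul_comm]; exact u.val_mul_inv hn

end ProfiniteUnit

section PadicGlue

open Nat

variable (p : ℕ) [hp : Fact p.Prime]

theorem Nat.modEq_of_modEq_ordProj_of_modEq_ordCompl {n x y : ℕ}
    (hpow : x ≡ y [MOD p ^ n.factorization p]) (hcompl : x ≡ y [MOD ordCompl[p] n]) :
    x ≡ y [MOD n] := by
  rcases eq_or_ne n 0 with rfl | hn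
  · simpa using hcompl
  have hcop := (Nat.coprime_ordCompl hp.out hn).pow_left (n.factorization p)
  simpa [Nat.ordProj_mul_ordCompl_eq_self] using
    (Nat.modEq_and_modEq_iff_modEq_mul hcop).mp ⟨hpow, hcompl⟩

/-- Modulo `n`, the element of `Ẑ = ℤ_p × ∏_{ℓ ≠ p} ℤ_ℓ` whose `p`-component has residues `r k`
modulo `p ^ k` and whose other components are `1`. The modulus `p ^ (v_p n + 1)` rather than
`p ^ v_p n` keeps the residue modulo `p` meaningful when `p ∤ n`. -/
def padicGlue (r : ℕ → ℕ) (n : ℕ) : ℕ :=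
  if hn : n = 0 then 0 else
    Nat.chineseRemainder ((Nat.coprime_ordCompl hp.out hn).pow_left (n.factorization p + 1))
      (r (n.factorization p + 1)) 1

variable {p} {r s : ℕ → ℕ} {n : ℕ}

theorem padicGlue_modEq_pow (hn : n ≠ 0) :
    padicGlue p r n ≡ r (n.factorization p + 1) [MOD p ^ (n.factorization p + 1)] := by
  rw [padicGlue, dif_neg hn]
  exact (Nat.chineseRemainder _ _ _).2.1

theorem padicGlue_modEq_ordCompl (hn : n ≠ 0) : padicGlue p r n ≡ 1 [MOD ordCompl[p] n] := by
  rw [padicGlue, dif_neg hn]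
  exact (Nat.chineseRemainder _ _ _).2.2

theorem padicGlue_modEq_prime (hn : n ≠ 0) :
    padicGlue p r n ≡ r (n.factorization p + 1) [MOD p] :=
  (padicGlue_modEq_pow hn).of_dvd (dvd_pow_self p (succ_ne_zero _))

theorem padicGlue_compat (hr : ∀ ⦃k l : ℕ⦄, k ≤ l → r l ≡ r k [MOD p ^ k]) ⦃m n : ℕ⦄
    (hn : n ≠ 0) (hmn : m ∣ n) : padicGlue p r n ≡ padicGlue p r m [MOD m] := by
  have hm : m ≠ 0 := ne_zero_of_dvd_ne_zero hn hmn
  have hle : m.factorization p ≤ n.factorization p :=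
    (Nat.pow_dvd_pow_iff_le_right hp.out.one_lt).mp (Nat.ordProj_dvd_ordProj_of_dvd hn hmn p)
  apply Nat.modEq_of_modEq_ordProj_of_modEq_ordCompl p
  · have hdvd_n : p ^ m.factorization p ∣ p ^ (n.factorization p + 1) := pow_dvd_pow p (by omega)
    have hdvd_m : p ^ m.factorization p ∣ p ^ (m.factorization p + 1) := pow_dvd_pow p (by omega)
    calc padicGlue p r n ≡ r (n.factorization p + 1) [MOD p ^ m.factorization p] :=
          (padicGlue_modEq_pow hn).of_dvd hdvd_n
      _ ≡ r (m.factorization p + 1) [MOD p ^ m.factorization p] :=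
          (hr (by omega)).of_dvd hdvd_m
      _ ≡ padicGlue p r m [MOD p ^ m.factorization p] :=
          ((padicGlue_modEq_pow hm).of_dvd hdvd_m).symm
  · exact ((padicGlue_modEq_ordCompl hn).of_dvd (Nat.ordCompl_dvd_ordCompl_of_dvd hmn p)).trans
      (padicGlue_modEq_ordCompl hm).symm

theorem padicGlue_mul_padicGlue (hrs : ∀ k, r k * s k ≡ 1 [MOD p ^ k]) (hn : n ≠ 0) :
    padicGlue p r n * padicGlue p s n ≡ 1 [MOD n] := by
  apply Nat.modEq_of_modEq_ordProj_of_modEq_ordCompl p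
  · exact (((padicGlue_modEq_pow hn).mul (padicGlue_modEq_pow hn)).trans (hrs _)).of_dvd
      (pow_dvd_pow p (le_succ _))
  · simpa using (padicGlue_modEq_ordCompl hn).mul (padicGlue_modEq_ordCompl (r := s) hn)

end PadicGlue

instance Nat.fact_prime_five : Fact (Nat.Prime 5) := ⟨Nat.prime_five⟩

theorem Nat.two_mul_five_pow_succ_div_two_modEq_one (k : ℕ) :
    2 * ((5 ^ k + 1) / 2) ≡ 1 [MOD 5 ^ k] :=
  Nat.two_mul_succ_div_two_modEq_one (Odd.pow (by decide))

namespace ProfiniteUnit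

/-- The unit of `Ẑ` that is `2` in `ℤ₅` and `1` in every other `ℤ_ℓ`. -/
def fiveAdicTwo : ProfiniteUnit where
  val := padicGlue 5 fun _ => 2
  inv := padicGlue 5 fun k => (5 ^ k + 1) / 2
  val_compat := padicGlue_compat (r := fun _ => 2) fun _ _ _ => Nat.ModEq.refl 2
  val_mul_inv _ :=
    padicGlue_mul_padicGlue (r := fun _ => 2) Nat.two_mul_five_pow_succ_div_two_modEq_one

theorem fiveAdicTwo_val_modEq {n : ℕ} (hn : n ≠ 0) : fiveAdicTwo.val n ≡ 2 [MOD 5] :=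
  padicGlue_modEq_prime (r := fun _ => 2) hn

theorem fiveAdicTwo_inv_modEq {n : ℕ} (hn : n ≠ 0) : fiveAdicTwo.inv n ≡ 3 [MOD 5] :=
  (padicGlue_modEq_prime (r := fun k => (5 ^ k + 1) / 2) hn).trans <|
    Nat.ModEq.of_mul_modEq_one rfl
      ((Nat.two_mul_five_pow_succ_div_two_modEq_one _).of_dvd
        (dvd_pow_self 5 (Nat.succ_ne_zero _)))
      (by decide)

end ProfiniteUnit

theorem QuotientGroup.pow_eq_pow_of_modEq_index {G : Type*} [Group G] {N : Subgroup G} [N.Normal]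
    (x : G ⧸ N) {k l : ℕ} (h : k ≡ l [MOD N.index]) : x ^ k = x ^ l := by
  rw [← pow_mod_natCard, ← pow_mod_natCard x l, ← Subgroup.index_eq_card, h]

def FinQuot.ofKer {G Q : Type*} [Group G] [Group Q] [Finite Q] (φ : G →* Q) : FinQuot G :=
  ⟨φ.ker, inferInstance, inferInstance⟩

namespace ProfComp

variable {G H : Type*} [Group G] [Group H] {f : ∀ N : FinQuot H, G →* H ⧸ N.1}

def IsCompatible (f : ∀ N : FinQuot H, G →* H ⧸ N.1) : Prop :=
  ∀ (N M : FinQuot H) (h : N.1 ≤ M.1),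
    (QuotientGroup.map N.1 M.1 (MonoidHom.id H) h).comp (f N) = f M

theorem IsCompatible.ker_mono (hf : IsCompatible f) {N M : FinQuot H} (h : N.1 ≤ M.1) :
    (f N).ker ≤ (f M).ker := fun g hg => by
  rw [MonoidHom.mem_ker, ← hf N M h, MonoidHom.comp_apply, hg, map_one]

def lift (f : ∀ N : FinQuot H, G →* H ⧸ N.1) (hf : IsCompatible f) :
    ProfComp G →* ProfComp H where
  toFun x := ⟨fun N => QuotientGroup.kerLift (f N) (x.1 (FinQuot.ofKer (f N))), fun N M h => by
    obtain ⟨g, hg⟩ := QuotientGroup.mk_surjective (x.1 (FinQuot.ofKer (f N)))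
    have hx := x.2 (FinQuot.ofKer (f N)) (FinQuot.ofKer (f M)) (hf.ker_mono h)
    dsimp only
    rw [← hx, ← hg]
    simp only [QuotientGroup.map_mk, MonoidHom.id_apply]
    exact DFunLike.congr_fun (hf N M h) g⟩
  map_one' := Subtype.ext <| funext fun N => map_one (QuotientGroup.kerLift (f N))
  map_mul' x y := Subtype.ext <| funext fun N => map_mul (QuotientGroup.kerLift (f N)) _ _

theorem lift_comp_lift {g : ∀ P : FinQuot G, H →* G ⧸ P.1} (hf : IsCompatible f)
    (hg : IsCompatible g)
    (hgf : ∀ P, (QuotientGroup.kerLift (g P)).comp (f (FinQuot.ofKer (g P))) =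
      QuotientGroup.mk' P.1) :
    (lift g hg).comp (lift f hf) = MonoidHom.id (ProfComp G) := by
  refine MonoidHom.ext fun x => Subtype.ext <| funext fun P => ?_
  set K := FinQuot.ofKer (f (FinQuot.ofKer (g P)))
  have hgf_apply (a : G) : QuotientGroup.kerLift (g P) (f (FinQuot.ofKer (g P)) a) = a :=
    DFunLike.congr_fun (hgf P) a
  have hKP : K.1 ≤ P.1 := fun a ha => (QuotientGroup.eq_one_iff a).mp <| by
    rw [← hgf_apply, (MonoidHom.mem_ker).mp ha]
    exact map_one _
  obtain ⟨a, ha⟩ := QuotientGroup.mk_surjective (x.1 K)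
  calc QuotientGroup.kerLift (g P) (QuotientGroup.kerLift (f (FinQuot.ofKer (g P))) (x.1 K))
      = a := by rw [← ha]; exact hgf_apply a
    _ = x.1 P := by rw [← x.2 K P hKP, ← ha]; rfl

end ProfComp

open SemidirectProduct Multiplicative

theorem SemidirectProduct.mul_inl_mul_inv {N G : Type*} [CommGroup N] [Group G]
    {φ : G →* MulAut N} (x : N ⋊[φ] G) (n : N) : x * inl n * x⁻¹ = inl (φ x.right n) := by
  ext <;> simp [mul_comm]

theorem MulAut.commute_of_isCyclic {C : Type*} [Group C] [IsCyclic C] (σ τ : MulAut C) :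
    Commute σ τ :=
  (IsCyclic.mulAutMulEquiv C).injective (by rw [map_mul, map_mul, mul_comm])

theorem MulAut.eq_of_isConj_of_isCyclic {C : Type*} [Group C] [IsCyclic C] {σ τ : MulAut C}
    (h : IsConj σ τ) : σ = τ := by
  obtain ⟨c, rfl⟩ := isConj_iff.mp h
  rw [(MulAut.commute_of_isCyclic c σ).eq, mul_inv_cancel_right]

/-- The group `C ⋊_β ℤ`, written `ℤ ⋉_β C` in the paper; `inr (ofAdd 1)` is the generator `t`. -/
abbrev MappingTorus {C : Type*} [Group C] (β : MulAut C) : Type _ :=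
  C ⋊[zpowersHom (MulAut C) β] Multiplicative ℤ

namespace MappingTorus

section Twist

variable {C : Type*} [Group C] {β γ δ : MulAut C}

theorem hom_ext {Q : Type*} [Group Q] {f g : MappingTorus β →* Q}
    (hl : ∀ a, f (inl a) = g (inl a)) (ht : f (inr (ofAdd 1)) = g (inr (ofAdd 1))) : f = g :=
  SemidirectProduct.hom_ext (MonoidHom.ext hl) (MonoidHom.ext_mint ht)

def twistHom (k : ℕ) (h : γ ^ k = β) : MappingTorus β →* MappingTorus γ :=
  SemidirectProduct.map (MonoidHom.id C) (powMonoidHom k) fun g => by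
    ext a
    simp [← h, ← zpow_natCast, ← zpow_mul]

@[simp]
theorem twistHom_inr {k : ℕ} (h : γ ^ k = β) (x : Multiplicative ℤ) :
    twistHom k h (inr x) = inr (x ^ k) := rfl

theorem twistHom_comp_twistHom {k l : ℕ} (hk : γ ^ k = β) (hl : δ ^ l = γ) :
    (twistHom l hl).comp (twistHom k hk) = twistHom (k * l) (by rw [pow_mul', hl, hk]) :=
  hom_ext (fun _ => rfl) (by simp [← pow_mul, mul_comm])

theorem twistHom_one : twistHom 1 (pow_one β) = MonoidHom.id _ :=
  hom_ext (fun _ => rfl) (by simp)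

theorem mk'_comp_twistHom_congr {N : Subgroup (MappingTorus γ)} [N.Normal] {k l : ℕ}
    (hk : γ ^ k = β) (hl : γ ^ l = β) (h : k ≡ l [MOD N.index]) :
    (QuotientGroup.mk' N).comp (twistHom k hk) = (QuotientGroup.mk' N).comp (twistHom l hl) :=
  hom_ext (fun _ => rfl) (by simpa using QuotientGroup.pow_eq_pow_of_modEq_index _ h)

theorem mk'_comp_twistHom_comp_twistHom {N : Subgroup (MappingTorus β)} [N.Normal] {k l : ℕ}
    (hk : γ ^ k = β) (hl : β ^ l = γ) (h : k * l ≡ 1 [MOD N.index]) :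
    (QuotientGroup.mk' N).comp ((twistHom l hl).comp (twistHom k hk)) = QuotientGroup.mk' N := by
  rw [twistHom_comp_twistHom, mk'_comp_twistHom_congr _ (pow_one β) h, twistHom_one,
    MonoidHom.comp_id]

end Twist

section ProfiniteTwist

variable {C : Type*} [Group C] {β γ : MulAut C} (u : ProfiniteUnit)

noncomputable def twistQuot (hu : ∀ n, n ≠ 0 → γ ^ u.val n = β) (N : FinQuot (MappingTorus γ)) :
    MappingTorus β →* MappingTorus γ ⧸ N.1 :=
  (QuotientGroup.mk' N.1).comp (twistHom (u.val N.1.index) (hu _ N.2.2.index_ne_zero))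

theorem isCompatible_twistQuot (hu : ∀ n, n ≠ 0 → γ ^ u.val n = β) :
    ProfComp.IsCompatible (twistQuot u hu) := fun N M h =>
  (MonoidHom.ext fun _ => rfl : _ = (QuotientGroup.mk' M.1).comp
      (twistHom (u.val N.1.index) (hu _ N.2.2.index_ne_zero))).trans <|
    mk'_comp_twistHom_congr _ _ <| u.val_compat N.2.2.index_ne_zero (Subgroup.index_dvd_of_le h)

variable (hw : ∀ n, n ≠ 0 → β ^ u.inv n = γ)

theorem twistQuot_symm_comp_twistHom (P : FinQuot (MappingTorus β)) {k : ℕ} (hk : γ ^ k = β)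
    (hkw : k * u.inv P.1.index ≡ 1 [MOD P.1.index]) :
    (twistQuot u.symm hw P).comp (twistHom k hk) = QuotientGroup.mk' P.1 :=
  mk'_comp_twistHom_comp_twistHom hk (hw _ P.2.2.index_ne_zero) hkw

theorem index_ker_twistQuot_symm (hu : ∀ n, n ≠ 0 → γ ^ u.val n = β)
    (P : FinQuot (MappingTorus β)) : (twistQuot u.symm hw P).ker.index = P.1.index := by
  have hsurj : Function.Surjective (twistQuot u.symm hw P) := by
    refine Function.Surjective.of_comp
      (g := twistHom (u.val P.1.index) (hu _ P.2.2.index_ne_zero)) ?_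
    rw [← MonoidHom.coe_comp,
      twistQuot_symm_comp_twistHom u hw P _ (u.val_mul_inv P.2.2.index_ne_zero)]
    exact QuotientGroup.mk'_surjective P.1
  rw [Subgroup.index_ker, MonoidHom.range_eq_top_of_surjective _ hsurj, Subgroup.card_top,
    Subgroup.index_eq_card]

theorem kerLift_twistQuot_symm_comp_twistQuot (hu : ∀ n, n ≠ 0 → γ ^ u.val n = β)
    (P : FinQuot (MappingTorus β)) :
    (QuotientGroup.kerLift (twistQuot u.symm hw P)).comp
      (twistQuot u hu (FinQuot.ofKer (twistQuot u.symm hw P))) = QuotientGroup.mk' P.1 := by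
  -- the twisted quotient map is onto, so both twists use residues modulo the same index
  have hidx : (FinQuot.ofKer (twistQuot u.symm hw P)).1.index = P.1.index :=
    index_ker_twistQuot_symm u hw hu P
  refine (MonoidHom.ext fun _ => rfl).trans (twistQuot_symm_comp_twistHom u hw P _ ?_)
  rw [hidx]
  exact u.val_mul_inv P.2.2.index_ne_zero

end ProfiniteTwist

noncomputable def profTwistEquiv {C : Type*} [Group C] {β γ : MulAut C} (u : ProfiniteUnit)
    (hu : ∀ n, n ≠ 0 → γ ^ u.val n = β) (hw : ∀ n, n ≠ 0 → β ^ u.inv n = γ) :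
    ProfComp (MappingTorus β) ≃* ProfComp (MappingTorus γ) :=
  MonoidHom.toMulEquiv _ _
    (ProfComp.lift_comp_lift (isCompatible_twistQuot u hu) (isCompatible_twistQuot u.symm hw)
      (kerLift_twistQuot_symm_comp_twistQuot u hw hu))
    (ProfComp.lift_comp_lift (isCompatible_twistQuot u.symm hw) (isCompatible_twistQuot u hu)
      (kerLift_twistQuot_symm_comp_twistQuot u.symm hu hw))

section Rigidity

variable {C : Type*} [CommGroup C] [Finite C] {β γ : MulAut C}

theorem rightHom_map_inl (ψ : MappingTorus β →* MappingTorus γ) (a : C) :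
    rightHom (ψ (inl a)) = 1 := by
  have hpow : rightHom (ψ (inl a)) ^ Nat.card C = 1 := by
    rw [← map_pow, ← map_pow, ← map_pow, pow_card_eq_one', map_one, map_one, map_one]
  exact (pow_eq_one_iff.mp hpow).resolve_right Nat.card_pos.ne'

def restrictFiber (ψ : MappingTorus β →* MappingTorus γ) : C →* C where
  toFun a := (ψ (inl a)).left
  map_one' := by simp
  map_mul' a b := by
    have ha : (ψ (inl a)).right = 1 := rightHom_map_inl ψ a
    simp [ha]

theorem inl_restrictFiber (ψ : MappingTorus β →* MappingTorus γ) (a : C) :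
    inl (restrictFiber ψ a) = ψ (inl a) :=
  SemidirectProduct.ext rfl (rightHom_map_inl ψ a).symm

theorem rightHom_comp (ψ : MappingTorus β →* MappingTorus γ) :
    rightHom.comp ψ = (zpowersHom _ (rightHom (ψ (inr (ofAdd 1))))).comp rightHom :=
  hom_ext (fun a => by simpa using rightHom_map_inl ψ a) (by simp)

noncomputable def fiberEquiv (ψ : MappingTorus β ≃* MappingTorus γ) : MulAut C :=
  MulEquiv.ofBijective (restrictFiber ψ.toMonoidHom) <| Finite.injective_iff_bijective.mp
    fun a b h => inl_injective <| ψ.injective <| by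
      rw [← MulEquiv.coe_toMonoidHom, ← inl_restrictFiber, ← inl_restrictFiber, h]

theorem isUnit_rightHom_map_inr (ψ : MappingTorus β ≃* MappingTorus γ) :
    IsUnit (toAdd (rightHom (ψ (inr (ofAdd 1))))) := by
  obtain ⟨x, hx⟩ := (rightHom_surjective.comp ψ.surjective) (ofAdd (1 : ℤ))
  have h := DFunLike.congr_fun (rightHom_comp ψ.toMonoidHom) x
  simp only [MonoidHom.comp_apply, MulEquiv.coe_toMonoidHom, Function.comp_apply] at h hx
  rw [hx, zpowersHom_apply] at h
  have h1 := congrArg toAdd h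
  rw [toAdd_ofAdd, toAdd_zpow, smul_eq_mul] at h1
  exact IsUnit.of_mul_eq_one_right _ h1.symm

theorem isConj_zpow (ψ : MappingTorus β ≃* MappingTorus γ) :
    IsConj β (γ ^ toAdd (rightHom (ψ (inr (ofAdd 1))))) := by
  refine isConj_iff.mpr ⟨fiberEquiv ψ, mul_inv_eq_iff_eq_mul.mpr <| MulEquiv.ext fun a => ?_⟩
  apply inl_injective (φ := zpowersHom (MulAut C) γ)
  have hconj : inl (β a) = (inr (ofAdd 1) * inl a * (inr (ofAdd 1))⁻¹ : MappingTorus β) := by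
    simpa using (mul_inl_mul_inv (inr (ofAdd 1) : MappingTorus β) a).symm
  set σ := restrictFiber ψ.toMonoidHom
  calc inl (σ (β a)) = ψ (inl (β a)) := inl_restrictFiber _ _
    _ = ψ (inr (ofAdd 1)) * ψ (inl a) * (ψ (inr (ofAdd 1)))⁻¹ := by
      rw [hconj, map_mul, map_mul, map_inv]
    _ = ψ (inr (ofAdd 1)) * inl (σ a) * (ψ (inr (ofAdd 1)))⁻¹ := by
      rw [inl_restrictFiber]; rfl
    _ = inl ((γ ^ toAdd (rightHom (ψ (inr (ofAdd 1))))) (σ a)) := by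
      rw [mul_inl_mul_inv]; simp

theorem isConj_or_isConj_inv (ψ : MappingTorus β ≃* MappingTorus γ) :
    IsConj β γ ∨ IsConj β γ⁻¹ := by
  have hconj := isConj_zpow ψ
  rcases Int.isUnit_iff.mp (isUnit_rightHom_map_inr ψ) with h | h
  · left; rwa [h, zpow_one] at hconj
  · right; rwa [h, zpow_neg_one] at hconj

end Rigidity

end MappingTorus

/-- Let `α` be a generator of `Aut(C₁₁) ≅ ℤ/10`.  The semidirect products
`ℤ ⋉_{α²} C₁₁` and `ℤ ⋉_{α⁶} C₁₁` are not isomorphic as groups, although their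
profinite completions are isomorphic. -/
theorem semidirect_c11_not_isomorphic_profinitely_isomorphic
    (α : MulAut (Multiplicative (ZMod 11))) (hα : orderOf α = 10) :
    IsEmpty ((Multiplicative (ZMod 11)) ⋊[zpowersHom (MulAut (Multiplicative (ZMod 11))) (α ^ 2)] Multiplicative ℤ ≃*
      (Multiplicative (ZMod 11)) ⋊[zpowersHom (MulAut (Multiplicative (ZMod 11))) (α ^ 6)] Multiplicative ℤ) ∧
    Nonempty (ProfComp ((Multiplicative (ZMod 11)) ⋊[zpowersHom (MulAut (Multiplicative (ZMod 11))) (α ^ 2)] Multiplicative ℤ) ≃*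
      ProfComp ((Multiplicative (ZMod 11)) ⋊[zpowersHom (MulAut (Multiplicative (ZMod 11))) (α ^ 6)] Multiplicative ℤ)) := by
  have hne : α ^ 2 ≠ α ^ 6 := fun h => by
    rw [pow_eq_pow_iff_modEq, hα] at h
    exact absurd h (by decide)
  have hne_inv : α ^ 2 ≠ (α ^ 6)⁻¹ := fun h => by
    have h8 : α ^ 8 = 1 := by rw [pow_add α 2 6, h, inv_mul_cancel]
    exact absurd (orderOf_dvd_of_pow_eq_one h8) (by rw [hα]; decide)
  refine ⟨⟨fun ψ => ?_⟩, ⟨MappingTorus.profTwistEquiv ProfiniteUnit.fiveAdicTwo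
    (fun n hn => ?_) (fun n hn => ?_)⟩⟩
  · rcases MappingTorus.isConj_or_isConj_inv ψ with h | h
    exacts [hne (MulAut.eq_of_isConj_of_isCyclic h), hne_inv (MulAut.eq_of_isConj_of_isCyclic h)]
  · rw [← pow_mul, pow_eq_pow_iff_modEq, hα]
    exact (((ProfiniteUnit.fiveAdicTwo_val_modEq hn).mul_left' 6).of_dvd (by norm_num)).trans
      (by decide)
  · rw [← pow_mul, pow_eq_pow_iff_modEq, hα]
    exact ((ProfiniteUnit.fiveAdicTwo_inv_modEq hn).mul_left' 2).trans (by decide)
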